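/- Let k, l ≥ 0 and let λ = (1^k,2^l) be the partition of k+2l with k parts equal to 1 and l parts equal to 2. For every partition μ of k+2l, K^{-1}_{(1^k,2^l),μ} = 0 unless μ = (1^{k+2t},2^{l−t}) for some 0 ≤ t ≤ l, and in that case K^{-1}_{(1^k,2^l),(1^{k+2t},2^{l−t})} = (−1)^t · (k+t)! / (k!·t!). -/

import Mathlib

open Finset MvPolynomial

/-- The `p`-th entry of an `n`-tuple, with default value `0` out of range. -/
def nth (n : ℕ) (f : Fin n → ℕ) (p : ℕ) : ℕ := if h : p < n then f ⟨p, h⟩ else 0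

/-- `a_α = det (x_j ^ α_i)`. -/
noncomputable def aDet (n : ℕ) (α : Fin n → ℕ) : MvPolynomial (Fin n) ℤ :=
  (Matrix.of fun i j : Fin n => (X j : MvPolynomial (Fin n) ℤ) ^ α i).det

/-- `x ^ β = ∏ x_i ^ β_i`. -/
noncomputable def xpow (n : ℕ) (β : Fin n → ℕ) : MvPolynomial (Fin n) ℤ :=
  ∏ i, X i ^ β i

/-- The monomial symmetric polynomial `m_lam(n) = Σ_{w ∈ Sₙ^lam} x^{w(lam)}`:
the sum of `x^β` over all distinct rearrangements `β` of `lam`. -/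
noncomputable def msym (n : ℕ) (lam : Fin n → ℕ) : MvPolynomial (Fin n) ℤ :=
  ∑ β ∈ Finset.univ.image (fun σ : Equiv.Perm (Fin n) => lam ∘ σ), xpow n β

/-- `δ(n) = (0, 1, …, n-1)`. -/
def deltaN (n : ℕ) : Fin n → ℕ := fun i => (i : ℕ)

/-- `P(m∣n)`: partitions of `m` as nondecreasing `n`-tuples (zeros at the beginning). -/
def Par (n m : ℕ) : Finset (Fin n → ℕ) :=
  (Fintype.piFinset fun _ : Fin n => Finset.range (m + 1)).filter
    fun μ => (∀ i j : Fin n, i ≤ j → μ i ≤ μ j) ∧ ∑ i, μ i = m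

/-- `K` is the inverse Kostka matrix in `n` variables: for every weight `m` and
every `lam ∈ P(m∣n)`, `m_lam(n) · a_{δ(n)} = Σ_{μ ∈ P(m∣n)} K lam μ · a_{μ+δ(n)}`
(equivalently `m_lam(n) = Σ_μ K lam μ · s_μ(n)`). -/
def IsInvKostka (n : ℕ) (K : (Fin n → ℕ) → (Fin n → ℕ) → ℤ) : Prop :=
  ∀ m : ℕ, ∀ lam ∈ Par n m,
    msym n lam * aDet n (deltaN n) =
      ∑ μ ∈ Par n m, C (K lam μ) * aDet n (fun i => μ i + (i : ℕ))

/-- The partition `(1^a, 2^b, 3^c)` as a nondecreasing `n`-tuple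
(requires `a + b + c ≤ n`). -/
def tuple3 (n a b c : ℕ) : Fin n → ℕ :=
  fun i => if (i : ℕ) < n - a - b - c then 0
    else if (i : ℕ) < n - b - c then 1
    else if (i : ℕ) < n - c then 2 else 3

/-!
Comparing coefficients of `x^(μ+δ)` in `m_λ · a_δ = Σ_μ K⁻¹_{λμ} a_{μ+δ}` gives
`K⁻¹_{λμ} = Σ_σ sgn σ · [μ + δ - σ(δ) is a rearrangement of λ]`. For `λ = (1^k, 2^l)` and
`|μ| = k + 2l` the rearrangement condition says that all entries of `μ + δ - σ(δ)` lie in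
`{0, 1, 2}` and exactly `l` of them equal `2`. Hence `K⁻¹_{λμ}` is the coefficient of `X^l` in
the band determinant `det (w (μ_i + i - j))`, where `w` is the coefficient sequence of
`1 + z + X z²`. Expanding along the last row, this determinant vanishes if `μ` has a part `≥ 3`,
and equals `X^b G_a` for `μ = (1^a, 2^b)`, where `G_0 = G_1 = 1`, `G_{a+2} = G_{a+1} - X G_a`;
the coefficients of `G_a` are `(-1)^t C(a - t, t)`.
-/

section Tuple3

variable {n : ℕ}

lemma tuple3_zero_apply (a b : ℕ) (i : Fin n) :
    tuple3 n a b 0 i =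
      if (i : ℕ) < n - a - b then 0 else if (i : ℕ) < n - b then 1 else 2 := by
  simp [tuple3]

lemma tuple3_zero_le_two (a b : ℕ) (i : Fin n) : tuple3 n a b 0 i ≤ 2 := by
  rw [tuple3_zero_apply]; split_ifs <;> omega

lemma monotone_tuple3_zero (a b : ℕ) : Monotone (tuple3 n a b 0) := by
  intro i j hij
  have : (i : ℕ) ≤ j := hij
  simp only [tuple3_zero_apply]
  split_ifs <;> omega

lemma tuple3_last_of_two {m : ℕ} (a b : ℕ) :
    tuple3 (m + 1) a (b + 1) 0 (Fin.last m) = 2 := by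
  rw [tuple3_zero_apply, if_neg (by simp; omega), if_neg (by simp)]

lemma tuple3_comp_castSucc_of_two {m : ℕ} (a b : ℕ) :
    tuple3 (m + 1) a (b + 1) 0 ∘ Fin.castSucc = tuple3 m a b 0 := by
  funext i
  simp only [Function.comp_apply, tuple3_zero_apply, Fin.val_castSucc]
  split_ifs <;> omega

lemma tuple3_last_of_one {m : ℕ} (a : ℕ) :
    tuple3 (m + 1) (a + 1) 0 0 (Fin.last m) = 1 := by
  rw [tuple3_zero_apply, if_neg (by simp), if_pos (by simp)]

lemma tuple3_comp_castSucc_of_one {m : ℕ} (a : ℕ) :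
    tuple3 (m + 1) (a + 1) 0 0 ∘ Fin.castSucc = tuple3 m a 0 0 := by
  funext i
  have := i.isLt
  simp only [Function.comp_apply, tuple3_zero_apply, Fin.val_castSucc]
  split_ifs <;> omega

lemma card_filter_le_val (c : ℕ) : #{i : Fin n | c ≤ (i : ℕ)} = n - c := by
  have := card_filter_add_card_filter_not (s := univ) (fun i : Fin n => (i : ℕ) < c)
  simp only [not_lt, card_univ, Fintype.card_fin, Fin.card_filter_val_lt] at this
  omega

lemma le_apply_iff_of_monotone {γ : Fin n → ℕ} (hγ : Monotone γ) (v : ℕ) (i : Fin n) :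
    v ≤ γ i ↔ n - #{j | v ≤ γ j} ≤ i := by
  constructor
  · intro hi
    have : Ici i ⊆ ({j | v ≤ γ j} : Finset (Fin n)) := fun j hj => by
      simpa using hi.trans (hγ (mem_Ici.mp hj))
    have := card_le_card this
    rw [Fin.card_Ici] at this
    omega
  · intro hi
    by_contra hlt
    have : ({j | v ≤ γ j} : Finset (Fin n)) ⊆ Ioi i := fun j hj => by
      simp only [mem_filter, mem_univ, true_and] at hj
      exact mem_Ioi.mpr (lt_of_not_ge fun hji => hlt (hj.trans (hγ hji)))
    have := card_le_card this
    rw [Fin.card_Ioi] at this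
    omega

variable {γ : Fin n → ℕ}

lemma card_one_le_of_le_two (hγ : ∀ i, γ i ≤ 2) :
    #{i | 1 ≤ γ i} = #{i | γ i = 1} + #{i | γ i = 2} := by
  rw [← card_union_of_disjoint (disjoint_filter.mpr fun i _ h1 h2 => by omega), ← filter_or]
  congr 1
  ext i
  simp only [mem_filter, mem_univ, true_and]
  have := hγ i
  omega

lemma card_two_le_of_le_two (hγ : ∀ i, γ i ≤ 2) : #{i | 2 ≤ γ i} = #{i | γ i = 2} := by
  congr 1
  ext i
  simp only [mem_filter, mem_univ, true_and]
  have := hγ i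
  omega

lemma sum_eq_of_le_two (hγ : ∀ i, γ i ≤ 2) :
    ∑ i, γ i = #{i | γ i = 1} + 2 * #{i | γ i = 2} := by
  simp only [card_filter, mul_sum, ← sum_add_distrib]
  refine sum_congr rfl fun i _ => ?_
  have := hγ i
  split_ifs <;> omega

lemma eq_tuple3_of_monotone (hmono : Monotone γ) (hγ : ∀ i, γ i ≤ 2) :
    γ = tuple3 n #{i | γ i = 1} #{i | γ i = 2} 0 := by
  funext i
  have h1 := le_apply_iff_of_monotone hmono 1 i
  have h2 := le_apply_iff_of_monotone hmono 2 i
  rw [card_one_le_of_le_two hγ] at h1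
  rw [card_two_le_of_le_two hγ] at h2
  rw [tuple3_zero_apply]
  have := hγ i
  split_ifs <;> omega

lemma card_one_le_tuple3 {a b : ℕ} (h : a + b ≤ n) :
    #{i | 1 ≤ tuple3 n a b 0 i} = a + b := by
  have hc : ∀ i : Fin n, 1 ≤ tuple3 n a b 0 i ↔ n - (a + b) ≤ (i : ℕ) := fun i => by
    rw [tuple3_zero_apply]; split_ifs <;> omega
  rw [filter_congr fun i _ => hc i, card_filter_le_val]
  omega

lemma card_two_le_tuple3 {a b : ℕ} (h : a + b ≤ n) : #{i | 2 ≤ tuple3 n a b 0 i} = b := by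
  have hc : ∀ i : Fin n, 2 ≤ tuple3 n a b 0 i ↔ n - b ≤ (i : ℕ) := fun i => by
    rw [tuple3_zero_apply]; split_ifs <;> omega
  rw [filter_congr fun i _ => hc i, card_filter_le_val]
  omega

lemma card_tuple3_eq_two {a b : ℕ} (h : a + b ≤ n) : #{i | tuple3 n a b 0 i = 2} = b := by
  rw [← card_two_le_of_le_two (tuple3_zero_le_two a b), card_two_le_tuple3 h]

lemma card_tuple3_eq_one {a b : ℕ} (h : a + b ≤ n) : #{i | tuple3 n a b 0 i = 1} = a := by
  have := card_one_le_of_le_two (tuple3_zero_le_two (n := n) a b)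
  rw [card_one_le_tuple3 h, card_tuple3_eq_two h] at this
  omega

lemma sum_tuple3 {a b : ℕ} (h : a + b ≤ n) : ∑ i, tuple3 n a b 0 i = a + 2 * b := by
  rw [sum_eq_of_le_two (tuple3_zero_le_two a b), card_tuple3_eq_one h, card_tuple3_eq_two h]

lemma tuple3_mem_Par {a b : ℕ} (h : a + b ≤ n) : tuple3 n a b 0 ∈ Par n (a + 2 * b) := by
  refine mem_filter.mpr
    ⟨Fintype.mem_piFinset.mpr fun i => ?_, monotone_tuple3_zero a b, sum_tuple3 h⟩
  rw [mem_range, tuple3_zero_apply]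
  split_ifs <;> omega

lemma monotone_of_mem_Par {μ : Fin n → ℕ} {m : ℕ} (hμ : μ ∈ Par n m) : Monotone μ :=
  fun i j hij => (mem_filter.mp hμ).2.1 i j hij

lemma sum_of_mem_Par {μ : Fin n → ℕ} {m : ℕ} (hμ : μ ∈ Par n m) : ∑ i, μ i = m :=
  (mem_filter.mp hμ).2.2

lemma exists_eq_tuple3_of_mem_Par {μ : Fin n → ℕ} {m : ℕ} (hμ : μ ∈ Par n m)
    (hμ2 : ∀ i, μ i ≤ 2) : ∃ a b, a + b ≤ n ∧ a + 2 * b = m ∧ μ = tuple3 n a b 0 := by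
  refine ⟨_, _, ?_, ?_, eq_tuple3_of_monotone (monotone_of_mem_Par hμ) hμ2⟩
  · rw [← card_one_le_of_le_two hμ2]
    exact card_le_univ _ |>.trans_eq (Fintype.card_fin n)
  · rw [← sum_eq_of_le_two hμ2, sum_of_mem_Par hμ]

end Tuple3

def rearrangements {n : ℕ} (β : Fin n → ℕ) : Finset (Fin n → ℕ) :=
  univ.image fun σ : Equiv.Perm (Fin n) => β ∘ σ

lemma msym_eq_sum_rearrangements (n : ℕ) (β : Fin n → ℕ) :
    msym n β = ∑ γ ∈ rearrangements β, xpow n γ :=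
  rfl

lemma card_comp_perm_eq {n : ℕ} (f : Fin n → ℕ) (σ : Equiv.Perm (Fin n)) (v : ℕ) :
    #{i | f (σ i) = v} = #{i | f i = v} :=
  card_equiv σ (by simp)

lemma mem_rearrangements_tuple3_iff {n k l : ℕ} (hkl : k + l ≤ n) {d : Fin n → ℕ}
    (hd : ∑ i, d i = k + 2 * l) :
    d ∈ rearrangements (tuple3 n k l 0) ↔ (∀ i, d i ≤ 2) ∧ #{i | d i = 2} = l := by
  constructor
  · intro hmem
    obtain ⟨σ, -, rfl⟩ := mem_image.mp hmem
    exact ⟨fun i => tuple3_zero_le_two k l (σ i),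
      (card_comp_perm_eq _ σ 2).trans (card_tuple3_eq_two hkl)⟩
  · rintro ⟨hd2, hcard2⟩
    obtain ⟨τ, hτ⟩ : ∃ τ : Equiv.Perm (Fin n), Monotone (d ∘ τ) := ⟨_, Tuple.monotone_sort d⟩
    have hcard1 : #{i | d (τ i) = 1} = k := by
      have := sum_eq_of_le_two hd2
      rw [card_comp_perm_eq d τ 1]
      omega
    have hsorted : d ∘ τ = tuple3 n k l 0 := by
      rw [eq_tuple3_of_monotone hτ fun i => hd2 (τ i)]
      simp only [Function.comp_apply, hcard1, card_comp_perm_eq d τ 2, hcard2]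
    refine mem_image.mpr ⟨τ⁻¹, mem_univ _, ?_⟩
    rw [← hsorted]
    funext i
    simp

section Alternant

variable {n : ℕ}

lemma xpow_eq_monomial (β : Fin n → ℕ) :
    xpow n β = monomial (Finsupp.equivFunOnFinite.symm β) 1 := by
  rw [monomial_eq, C_1, one_mul, Finsupp.prod_fintype _ _ fun _ => pow_zero _]
  rfl

lemma aDet_eq_sum (α : Fin n → ℕ) :
    aDet n α = ∑ σ : Equiv.Perm (Fin n),
      monomial (Finsupp.equivFunOnFinite.symm (α ∘ σ)) (Equiv.Perm.sign σ : ℤ) := by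
  rw [aDet, Matrix.det_apply]
  refine sum_congr rfl fun σ _ => ?_
  rw [← mul_one (Equiv.Perm.sign σ : ℤ), ← smul_eq_mul, ← smul_monomial, ← xpow_eq_monomial,
    Units.smul_def]
  rfl

lemma coeff_aDet_of_strictMono {α e : Fin n → ℕ} (hα : StrictMono α) (he : StrictMono e) :
    coeff (Finsupp.equivFunOnFinite.symm e) (aDet n α) = if α = e then 1 else 0 := by
  have key : ∀ σ : Equiv.Perm (Fin n), α ∘ σ = e ↔ σ = 1 ∧ α = e := by
    refine fun σ => ⟨fun h => ?_, fun ⟨hσ, hαe⟩ => by simp [hσ, hαe]⟩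
    have hσ : σ = 1 := by
      ext i
      have : StrictMono σ := fun _ _ hij => hα.lt_iff_lt.mp (by simpa [← h] using he hij)
      exact congrArg Fin.val this.apply_eq
    subst hσ
    exact ⟨rfl, h⟩
  simp only [aDet_eq_sum, coeff_sum, coeff_monomial, EmbeddingLike.apply_eq_iff_eq, key]
  by_cases hαe : α = e <;> simp [hαe]

lemma strictMono_add_val_of_mem_Par {μ : Fin n → ℕ} {m : ℕ} (hμ : μ ∈ Par n m) :
    StrictMono fun i : Fin n => μ i + (i : ℕ) :=
  fun _ _ hij => Nat.add_lt_add_of_le_of_lt (monotone_of_mem_Par hμ hij.le) hij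

lemma IsInvKostka.apply_eq_coeff {K : (Fin n → ℕ) → (Fin n → ℕ) → ℤ} (hK : IsInvKostka n K)
    {m : ℕ} {lam μ : Fin n → ℕ} (hlam : lam ∈ Par n m) (hμ : μ ∈ Par n m) :
    K lam μ = coeff (Finsupp.equivFunOnFinite.symm fun i => μ i + (i : ℕ))
      (msym n lam * aDet n (deltaN n)) := by
  have hinj : ∀ ν : Fin n → ℕ,
      ((fun i : Fin n => ν i + (i : ℕ)) = fun i => μ i + (i : ℕ)) ↔ ν = μ :=
    fun ν => ⟨fun h => funext fun i => by simpa using congrFun h i, fun h => h ▸ rfl⟩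
  simp only [hK m lam hlam, coeff_sum, coeff_C_mul]
  rw [sum_congr rfl fun ν hν => by
    rw [coeff_aDet_of_strictMono (strictMono_add_val_of_mem_Par hν)
      (strictMono_add_val_of_mem_Par hμ), mul_ite, mul_one, mul_zero]]
  simp only [hinj, sum_ite_eq', if_pos hμ]

lemma coeff_msym (β : Fin n → ℕ) (s : Fin n →₀ ℕ) :
    coeff s (msym n β) = if ⇑s ∈ rearrangements β then 1 else 0 := by
  simp only [msym_eq_sum_rearrangements, xpow_eq_monomial, coeff_sum, coeff_monomial,
    Equiv.symm_apply_eq]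
  exact sum_ite_eq' _ _ _

lemma coeff_msym_mul_aDet_deltaN (β e : Fin n → ℕ) :
    coeff (Finsupp.equivFunOnFinite.symm e) (msym n β * aDet n (deltaN n)) =
      ∑ σ : Equiv.Perm (Fin n), (Equiv.Perm.sign σ : ℤ) *
        if (∀ i, (σ i : ℕ) ≤ e i) ∧ (fun i => e i - σ i) ∈ rearrangements β then 1 else 0 := by
  rw [aDet_eq_sum, mul_sum, coeff_sum]
  refine sum_congr rfl fun σ _ => ?_
  have hle : Finsupp.equivFunOnFinite.symm (deltaN n ∘ σ) ≤ Finsupp.equivFunOnFinite.symm e ↔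
      ∀ i, (σ i : ℕ) ≤ e i :=
    Finsupp.le_def
  have hsub : ⇑(Finsupp.equivFunOnFinite.symm e - Finsupp.equivFunOnFinite.symm (deltaN n ∘ σ)) =
      fun i => e i - σ i :=
    Finsupp.coe_tsub _ _
  rw [coeff_mul_monomial', coeff_msym, hsub]
  by_cases h : ∀ i, (σ i : ℕ) ≤ e i <;> simp [hle, h, mul_comm]

end Alternant

section BandMatrix

variable {n : ℕ}

noncomputable def bandWeight : ℕ → Polynomial ℤ
  | 0 => 1
  | 1 => 1
  | 2 => Polynomial.X
  | _ + 3 => 0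

noncomputable def bandMat (μ : Fin n → ℕ) : Matrix (Fin n) (Fin n) (Polynomial ℤ) :=
  Matrix.of fun i j => if (j : ℕ) ≤ μ i + i then bandWeight (μ i + i - j) else 0

lemma bandMat_apply (μ : Fin n → ℕ) (i j : Fin n) :
    bandMat μ i j = if (j : ℕ) ≤ μ i + i then bandWeight (μ i + i - j) else 0 :=
  rfl

lemma bandWeight_eq_zero {d : ℕ} (h : 3 ≤ d) : bandWeight d = 0 := by
  obtain ⟨d, rfl⟩ := Nat.exists_eq_add_of_le' h
  rfl

lemma prod_bandWeight (d : Fin n → ℕ) :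
    ∏ i, bandWeight (d i) = if ∀ i, d i ≤ 2 then Polynomial.X ^ #{i | d i = 2} else 0 := by
  split_ifs with h
  · rw [card_filter, ← prod_pow_eq_pow_sum]
    refine prod_congr rfl fun i _ => ?_
    obtain h | h | h : d i = 0 ∨ d i = 1 ∨ d i = 2 := by have := h i; omega
    all_goals simp [h, bandWeight]
  · obtain ⟨i, hi⟩ := not_forall.mp h
    exact prod_eq_zero (mem_univ i) (bandWeight_eq_zero (by omega))

lemma coeff_prod_bandMat {k l : ℕ} (hkl : k + l ≤ n) {μ : Fin n → ℕ}
    (hμ : ∑ i, μ i = k + 2 * l) (σ : Equiv.Perm (Fin n)) :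
    (∏ i, bandMat μ i (σ i)).coeff l =
      if (∀ i, (σ i : ℕ) ≤ μ i + i) ∧ (fun i => μ i + i - σ i) ∈ rearrangements (tuple3 n k l 0)
      then 1 else 0 := by
  by_cases h : ∀ i, (σ i : ℕ) ≤ μ i + i
  · have hsum : ∑ i, (μ i + (i : ℕ) - σ i) = k + 2 * l := by
      rw [sum_tsub_distrib _ fun i _ => h i, sum_add_distrib, hμ,
        Equiv.sum_comp σ fun i : Fin n => (i : ℕ)]
      omega
    simp only [bandMat_apply, if_pos (h _)]
    simp only [prod_bandWeight, mem_rearrangements_tuple3_iff hkl hsum, h]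
    split_ifs <;> simp_all [Polynomial.coeff_X_pow, eq_comm]
  · obtain ⟨i, hi⟩ := not_forall.mp h
    rw [prod_eq_zero (mem_univ i) (if_neg hi)]
    simp [h]

lemma IsInvKostka.apply_tuple3_eq_coeff_det {K : (Fin n → ℕ) → (Fin n → ℕ) → ℤ}
    (hK : IsInvKostka n K) {k l : ℕ} (hkl : k + l ≤ n) {μ : Fin n → ℕ}
    (hμ : μ ∈ Par n (k + 2 * l)) :
    K (tuple3 n k l 0) μ = (bandMat μ).det.coeff l := by
  rw [hK.apply_eq_coeff (tuple3_mem_Par hkl) hμ, coeff_msym_mul_aDet_deltaN,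
    ← Matrix.det_transpose, Matrix.det_apply', Polynomial.finsetSum_coeff]
  refine sum_congr rfl fun σ _ => ?_
  rw [Polynomial.coeff_intCast_mul, Int.cast_id, ← coeff_prod_bandMat hkl (sum_of_mem_Par hμ) σ]
  rfl

end BandMatrix

lemma Matrix.det_succ_row_of_eq_zero {R : Type*} [CommRing R] {m : ℕ}
    (A : Matrix (Fin (m + 1)) (Fin (m + 1)) R) (i j₀ : Fin (m + 1))
    (h : ∀ j ≠ j₀, A i j = 0) :
    A.det = (-1) ^ (i + j₀ : ℕ) * A i j₀ * (A.submatrix i.succAbove j₀.succAbove).det := by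
  rw [A.det_succ_row i, Fintype.sum_eq_single j₀ fun j hj => by rw [h j hj, mul_zero, zero_mul]]

lemma Matrix.det_succ_column_of_eq_zero {R : Type*} [CommRing R] {m : ℕ}
    (A : Matrix (Fin (m + 1)) (Fin (m + 1)) R) (i₀ j : Fin (m + 1))
    (h : ∀ i ≠ i₀, A i j = 0) :
    A.det = (-1) ^ (i₀ + j : ℕ) * A i₀ j * (A.submatrix i₀.succAbove j.succAbove).det := by
  rw [A.det_succ_column j,
    Fintype.sum_eq_single i₀ fun i hi => by rw [h i hi, mul_zero, zero_mul]]

section BandDet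

variable {m : ℕ}

lemma bandMat_submatrix_castSucc (μ : Fin (m + 1) → ℕ) :
    (bandMat μ).submatrix Fin.castSucc Fin.castSucc = bandMat (μ ∘ Fin.castSucc) := by
  ext i j
  simp [bandMat_apply]

lemma det_bandMat_of_lowerTriangular {n : ℕ} {μ : Fin n → ℕ}
    (hlt : ∀ i j : Fin n, i < j → μ i = 0) (hle : ∀ i, μ i ≤ 1) : (bandMat μ).det = 1 := by
  rw [Matrix.det_of_isLowerTriangular _ fun i j hij => ?_]
  · refine prod_eq_one fun i _ => ?_
    obtain h | h : μ i = 0 ∨ μ i = 1 := by have := hle i; omega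
    all_goals simp [bandMat_apply, h, bandWeight]
  · have hij : (i : ℕ) < j := hij
    rw [bandMat_apply, hlt i j hij, if_neg (by omega)]

lemma det_bandMat_of_last_eq_two (μ : Fin (m + 1) → ℕ) (h : μ (Fin.last m) = 2) :
    (bandMat μ).det = Polynomial.X * (bandMat (μ ∘ Fin.castSucc)).det := by
  rw [Matrix.det_succ_row_of_eq_zero _ (Fin.last m) (Fin.last m) fun j hj => ?_]
  · simp [Fin.succAbove_last, bandMat_submatrix_castSucc, bandMat_apply, h, bandWeight]
  · have : (j : ℕ) < m := Fin.val_lt_last hj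
    rw [bandMat_apply, h, bandWeight_eq_zero (by simp; omega), ite_self]

/-- The minor of the entry `X` in the last row; its last column is `(0, …, 0, 1)`. -/
lemma det_bandMat_submatrix_succAbove (μ : Fin (m + 2) → ℕ) (hle : ∀ i, μ i ≤ 1)
    (hprev : μ (Fin.last m).castSucc = 1) :
    ((bandMat μ).submatrix Fin.castSucc (Fin.last m).castSucc.succAbove).det =
      (bandMat (μ ∘ Fin.castSucc ∘ Fin.castSucc)).det := by
  rw [Matrix.det_succ_column_of_eq_zero _ (Fin.last m) (Fin.last m) fun i hi => ?_]
  · have hsub : ((bandMat μ).submatrix Fin.castSucc (Fin.last m).castSucc.succAbove).submatrix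
        Fin.castSucc Fin.castSucc = bandMat (μ ∘ Fin.castSucc ∘ Fin.castSucc) := by
      refine Matrix.ext fun i j => ?_
      rw [Matrix.submatrix_apply, Matrix.submatrix_apply, Fin.succAbove_of_castSucc_lt _ _
        (Fin.castSucc_lt_castSucc_iff.mpr (Fin.castSucc_lt_last j))]
      simp [bandMat_apply]
    rw [Fin.succAbove_last, hsub, Matrix.submatrix_apply,
      Fin.succAbove_of_le_castSucc _ _ le_rfl, Fin.succ_last, bandMat_apply]
    simp [hprev, bandWeight, ← two_mul, add_comm 1 m]
  · have : (i : ℕ) < m := Fin.val_lt_last hi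
    have := hle i.castSucc
    rw [Matrix.submatrix_apply, Fin.succAbove_of_le_castSucc _ _ le_rfl, Fin.succ_last,
      bandMat_apply, if_neg (by simp; omega)]

lemma det_bandMat_of_last_eq_one (μ : Fin (m + 2) → ℕ) (hle : ∀ i, μ i ≤ 1)
    (hlast : μ (Fin.last (m + 1)) = 1) (hprev : μ (Fin.last m).castSucc = 1) :
    (bandMat μ).det = (bandMat (μ ∘ Fin.castSucc)).det -
      Polynomial.X * (bandMat (μ ∘ Fin.castSucc ∘ Fin.castSucc)).det := by
  rw [Matrix.det_succ_row (bandMat μ) (Fin.last (m + 1)),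
    Fintype.sum_eq_add (Fin.last (m + 1)) (Fin.last m).castSucc (Fin.castSucc_lt_last _).ne'
      fun j hj => ?_]
  · rw [Fin.succAbove_last, det_bandMat_submatrix_succAbove μ hle hprev,
      bandMat_submatrix_castSucc]
    have h2 : 1 + (m + 1) - m = 2 := by omega
    simp [bandMat_apply, hlast, bandWeight, ← two_mul, h2, sub_eq_add_neg,
      show m ≤ 1 + (m + 1) by omega]
  · have : (j : ℕ) < m := by
      have := Fin.val_lt_last hj.1
      have : (j : ℕ) ≠ m := fun h => hj.2 (Fin.ext h)
      omega
    rw [bandMat_apply, hlast, bandWeight_eq_zero (by simp; omega), ite_self, mul_zero, zero_mul]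

lemma det_bandMat_eq_zero_of_monotone {n : ℕ} {μ : Fin n → ℕ} (hμ : Monotone μ) {i : Fin n}
    (hi : 3 ≤ μ i) : (bandMat μ).det = 0 := by
  have hn : n - 1 < n := by have := i.isLt; omega
  refine Matrix.det_eq_zero_of_row_eq_zero ⟨n - 1, hn⟩ fun j => ?_
  have : μ i ≤ μ ⟨n - 1, hn⟩ := hμ (Fin.mk_le_mk.mpr (by omega) : i ≤ ⟨n - 1, hn⟩)
  have := j.isLt
  rw [bandMat_apply, bandWeight_eq_zero (by simp; omega), ite_self]

end BandDet

noncomputable def fibPoly : ℕ → Polynomial ℤ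
  | 0 => 1
  | 1 => 1
  | a + 2 => fibPoly (a + 1) - Polynomial.X * fibPoly a

lemma choose_sub_succ_succ (a s : ℕ) :
    (a + 1 - s).choose (s + 1) = (a - s).choose s + (a - s).choose (s + 1) := by
  rcases le_or_gt s a with h | h
  · rw [show a + 1 - s = a - s + 1 by omega, Nat.choose_succ_succ']
  · simp [Nat.sub_eq_zero_of_le h, Nat.sub_eq_zero_of_le h.le,
      Nat.choose_eq_zero_of_lt (Nat.zero_lt_of_lt h)]

lemma coeff_fibPoly : ∀ a t : ℕ, (fibPoly a).coeff t = (-1) ^ t * ((a - t).choose t : ℤ)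
  | 0, t => by cases t <;> simp [fibPoly, Polynomial.coeff_one]
  | 1, t => by rcases t with _ | _ | t <;> simp [fibPoly, Polynomial.coeff_one]
  | a + 2, 0 => by simp [fibPoly, coeff_fibPoly (a + 1) 0]
  | a + 2, s + 1 => by
    rw [fibPoly, Polynomial.coeff_sub, Polynomial.coeff_X_mul, coeff_fibPoly (a + 1) (s + 1),
      coeff_fibPoly a s, show a + 2 - (s + 1) = a + 1 - s by omega, choose_sub_succ_succ,
      show a + 1 - (s + 1) = a - s by omega]
    push_cast
    ring

lemma det_bandMat_tuple3 : ∀ {n a b : ℕ}, a + b ≤ n →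
    (bandMat (tuple3 n a b 0)).det = Polynomial.X ^ b * fibPoly a
  | 0, a, b, h => by
    obtain ⟨rfl, rfl⟩ : a = 0 ∧ b = 0 := by omega
    simp [fibPoly]
  | m + 1, a, b + 1, h => by
    rw [det_bandMat_of_last_eq_two _ (tuple3_last_of_two a b), tuple3_comp_castSucc_of_two,
      det_bandMat_tuple3 (by omega), pow_succ]
    ring
  | m + 1, 0, 0, _ | m + 1, 1, 0, _ => by
    rw [det_bandMat_of_lowerTriangular (fun i j hij => ?_) fun i => ?_]
    · simp [fibPoly]
    · have : (i : ℕ) < j := hij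
      have := j.isLt
      rw [tuple3_zero_apply, if_pos (by omega)]
    · rw [tuple3_zero_apply]
      split_ifs <;> omega
  | 1, a + 2, 0, h => by omega
  | m + 2, a + 2, 0, h => by
    have hprev := (congrFun (tuple3_comp_castSucc_of_one (a + 1)) (Fin.last m)).trans
      (tuple3_last_of_one a)
    rw [det_bandMat_of_last_eq_one _ (fun i => ?_) (tuple3_last_of_one _) hprev,
      ← Function.comp_assoc, tuple3_comp_castSucc_of_one, tuple3_comp_castSucc_of_one,
      det_bandMat_tuple3 (by omega), det_bandMat_tuple3 (by omega)]
    · simp [fibPoly]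
    · have := tuple3_zero_le_two (n := m + 2) (a + 2) 0 i
      rw [tuple3_zero_apply]
      split_ifs <;> omega

/-- `K⁻¹_{(1^k,2^l),μ} = 0` unless `μ = (1^{k+2t},2^{l-t})`, in which case it equals
`(-1)^t (k+t)!/(k!·t!)`. -/
theorem stmt14 (n k l : ℕ) (hn : k + 2 * l ≤ n)
    (K : (Fin n → ℕ) → (Fin n → ℕ) → ℤ) (hK : IsInvKostka n K) :
    (∀ μ ∈ Par n (k + 2 * l),
        (∀ t ≤ l, μ ≠ tuple3 n (k + 2 * t) (l - t) 0) → K (tuple3 n k l 0) μ = 0) ∧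
    ∀ t ≤ l, K (tuple3 n k l 0) (tuple3 n (k + 2 * t) (l - t) 0)
      = (-1) ^ t * (Nat.choose (k + t) t : ℤ) := by
  have hkl : k + l ≤ n := by omega
  refine ⟨fun μ hμ hne => ?_, fun t ht => ?_⟩
  · rw [hK.apply_tuple3_eq_coeff_det hkl hμ]
    by_cases hμ2 : ∀ i, μ i ≤ 2
    · obtain ⟨a, b, hab, hsum, rfl⟩ := exists_eq_tuple3_of_mem_Par hμ hμ2
      rw [det_bandMat_tuple3 hab, Polynomial.coeff_X_pow_mul',
        if_neg fun hbl => hne (l - b) (by omega) (by congr 1 <;> omega)]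
    · obtain ⟨i, hi⟩ := not_forall.mp hμ2
      rw [det_bandMat_eq_zero_of_monotone (monotone_of_mem_Par hμ) (by omega : 3 ≤ μ i),
        Polynomial.coeff_zero]
  · have hab : k + 2 * t + (l - t) ≤ n := by omega
    have hμ := tuple3_mem_Par hab
    rw [show k + 2 * t + 2 * (l - t) = k + 2 * l by omega] at hμ
    rw [hK.apply_tuple3_eq_coeff_det hkl hμ, det_bandMat_tuple3 hab, Polynomial.coeff_X_pow_mul',
      if_pos (Nat.sub_le l t), coeff_fibPoly, show l - (l - t) = t by omega,
      show k + 2 * t - t = k + t by omega]
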